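/- arXiv:1410.3447 — 10 statements merged into one kernel-verified Lean document; each statement's English description precedes it below -/
import Mathlib

section
/- Let A ∈ ℝ^{n×n}, B ∈ ℝ^{n×m}, B₁ ∈ ℝ^{n×p}, with (A,B) a controllable pair and the column space of B contained in the column space of B₁, and let Σ be a symmetric positive definite n×n matrix. Then there exists K ∈ ℝ^{m×n} such that A − BK is Hurwitz and (A − BK)Σ + Σ(A − BK)ᵀ + B₁B₁ᵀ = 0 if and only if there exists X ∈ ℝ^{n×m} such that AΣ + ΣAᵀ + B₁B₁ᵀ + BXᵀ + XBᵀ = 0. -/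
open Matrix

/-!
For the forward direction take `X := -Σ Kᵀ`; conversely `K := -Xᵀ Σ⁻¹` turns the equation for `X`
into the Lyapunov equation `FΣ + ΣFᵀ + B₁B₁ᵀ = 0` for `F := A - BK`. If `w F = μ w` with `w ≠ 0`
and `Re μ ≥ 0`, pairing that equation with `w` and `w*` gives `2 Re μ · wΣw* + |wB₁|² = 0`, so
`wB₁ = 0`. Since `B` factors through `B₁`, also `wB = 0`, hence `wA = μ w` and `w` annihilates
every `AᵏB`, which controllability forbids (the Popov–Belevitch–Hautus test).
-/

/-- The controllability matrix `[B, AB, A²B, …, A^{n−1}B]` (columns indexed by `Fin n × Fin m`). -/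
def ctrbMatrix {n m : ℕ} (A : Matrix (Fin n) (Fin n) ℝ) (B : Matrix (Fin n) (Fin m) ℝ) :
    Matrix (Fin n) (Fin n × Fin m) ℝ :=
  Matrix.of fun i p => ((A ^ (p.1 : ℕ)) * B) i p.2

/-- `(A,B)` is a controllable pair iff the controllability matrix has rank `n`. -/
def IsControllablePair {n m : ℕ} (A : Matrix (Fin n) (Fin n) ℝ)
    (B : Matrix (Fin n) (Fin m) ℝ) : Prop :=
  (ctrbMatrix A B).rank = n

/-- A real square matrix is Hurwitz iff all its (complex) eigenvalues have negative real part. -/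
def IsHurwitz {n : ℕ} (F : Matrix (Fin n) (Fin n) ℝ) : Prop :=
  ∀ μ ∈ spectrum ℂ (F.map (algebraMap ℝ ℂ)), μ.re < 0

namespace Matrix

theorem exists_vecMul_eq_smul_of_mem_spectrum {m K : Type*} [Fintype m] [DecidableEq m] [Field K]
    {M : Matrix m m K} {μ : K} (hμ : μ ∈ spectrum K M) : ∃ w ≠ 0, w ᵥ* M = μ • w := by
  rw [spectrum.mem_iff, Algebra.algebraMap_eq_smul_one, isUnit_iff_isUnit_det,
    isUnit_iff_ne_zero, not_not, ← exists_vecMul_eq_zero_iff] at hμ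
  obtain ⟨w, hw, hwM⟩ := hμ
  refine ⟨w, hw, ?_⟩
  rw [vecMul_sub, vecMul_smul, vecMul_one, sub_eq_zero] at hwM
  exact hwM.symm

theorem eq_zero_of_vecMul_eq_zero_of_rank_eq {m n K : Type*} [Fintype m] [Fintype n] [Field K]
    {M : Matrix m n K} (hM : M.rank = Fintype.card m) {w : m → K} (hw : w ᵥ* M = 0) : w = 0 := by
  have hrows : LinearIndependent K M.row := by
    rw [linearIndependent_iff_card_eq_finrank_span, ← hM, rank_eq_finrank_span_row]
    rfl
  rw [vecMul_eq_sum] at hw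
  exact funext (Fintype.linearIndependent_iff.mp hrows w hw)

theorem re_vecMul_map_ofReal {m n : Type*} [Fintype m] (M : Matrix m n ℝ) (w : m → ℂ) (j : n) :
    ((w ᵥ* M.map (algebraMap ℝ ℂ)) j).re = ((fun i => (w i).re) ᵥ* M) j := by
  simp [vecMul, dotProduct, Complex.re_sum]

theorem im_vecMul_map_ofReal {m n : Type*} [Fintype m] (M : Matrix m n ℝ) (w : m → ℂ) (j : n) :
    ((w ᵥ* M.map (algebraMap ℝ ℂ)) j).im = ((fun i => (w i).im) ᵥ* M) j := by
  simp [vecMul, dotProduct, Complex.im_sum]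

theorem eq_zero_of_vecMul_map_ofReal_eq_zero_of_rank_eq {m n : Type*} [Fintype m] [Fintype n]
    {M : Matrix m n ℝ} (hM : M.rank = Fintype.card m) {w : m → ℂ}
    (hw : w ᵥ* M.map (algebraMap ℝ ℂ) = 0) : w = 0 := by
  have hre := eq_zero_of_vecMul_eq_zero_of_rank_eq hM (w := fun i => (w i).re) <| funext fun j => by
    rw [← re_vecMul_map_ofReal, hw]; rfl
  have him := eq_zero_of_vecMul_eq_zero_of_rank_eq hM (w := fun i => (w i).im) <| funext fun j => by
    rw [← im_vecMul_map_ofReal, hw]; rfl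
  exact funext fun i => Complex.ext (congrFun hre i) (congrFun him i)

open scoped MatrixOrder ComplexOrder in
theorem PosSemidef.map_ofReal {n : Type*} [Fintype n] {S : Matrix n n ℝ} (hS : S.PosSemidef) :
    (S.map (algebraMap ℝ ℂ)).PosSemidef := by
  classical
  obtain ⟨R, rfl⟩ := CStarAlgebra.nonneg_iff_eq_star_mul_self.mp hS.nonneg
  rw [star_eq_conjTranspose, Matrix.map_mul, conjTranspose_map _ fun x => by simp]
  exact posSemidef_conjTranspose_mul_self _

theorem transpose_map_ofReal {m n : Type*} (M : Matrix m n ℝ) :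
    Mᵀ.map (algebraMap ℝ ℂ) = (M.map (algebraMap ℝ ℂ))ᴴ := by
  rw [← conjTranspose_map _ fun x => by simp, conjTranspose_eq_transpose_of_trivial]

theorem exists_eq_mul_of_range_mulVec_subset {R l m n : Type*} [CommSemiring R] [Fintype m]
    [Fintype n] [DecidableEq n] {B : Matrix l n R} {C : Matrix l m R}
    (h : Set.range B.mulVec ⊆ Set.range C.mulVec) : ∃ U : Matrix m n R, B = C * U := by
  choose u hu using fun j => h ⟨Pi.single j 1, rfl⟩
  refine ⟨(of u)ᵀ, ?_⟩
  ext i j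
  have hij := congrFun (hu j) i
  rw [mulVec_single_one] at hij
  simpa [mul_apply, mulVec, dotProduct] using hij.symm

end Matrix

open scoped ComplexOrder in
theorem vecMul_eq_zero_of_lyapunov {n p : Type*} [Fintype n] [Fintype p] {F S : Matrix n n ℂ}
    {C : Matrix n p ℂ} (hS : S.PosSemidef) (h : F * S + S * Fᴴ + C * Cᴴ = 0) {w : n → ℂ} {μ : ℂ}
    (hw : w ᵥ* F = μ • w) (hμ : 0 ≤ μ.re) : w ᵥ* C = 0 := by
  set q := (w ᵥ* S) ⬝ᵥ star w
  have hq : 0 ≤ q := by simpa [dotProduct_mulVec] using hS.dotProduct_mulVec_nonneg (star w)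
  have key : ((2 * μ.re : ℝ) : ℂ) * q + (w ᵥ* C) ⬝ᵥ star (w ᵥ* C) = 0 := by
    have h' := congrArg (fun M => w ⬝ᵥ (M *ᵥ star w)) h
    simp only [add_mulVec, dotProduct_add, ← mulVec_mulVec, dotProduct_mulVec w, ← star_vecMul,
      hw, star_smul, mulVec_smul, dotProduct_smul, smul_dotProduct, zero_mulVec,
      dotProduct_zero] at h'
    rw [← Complex.add_conj, add_mul, ← h']
    simp only [smul_eq_mul, q, RCLike.star_def]
  have hμq : 0 ≤ ((2 * μ.re : ℝ) : ℂ) * q :=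
    mul_nonneg (Complex.zero_le_real.mpr (by positivity)) hq
  have hwC : 0 ≤ (w ᵥ* C) ⬝ᵥ star (w ᵥ* C) := by
    rw [dotProduct_comm]; exact dotProduct_star_self_nonneg _
  rw [← dotProduct_star_self_eq_zero, dotProduct_comm]
  exact ((add_eq_zero_iff_of_nonneg hμq hwC).mp key).2

theorem IsControllablePair.eq_zero_of_vecMul_eq_smul {n m : ℕ} {A : Matrix (Fin n) (Fin n) ℝ}
    {B : Matrix (Fin n) (Fin m) ℝ} (hAB : IsControllablePair A B) {w : Fin n → ℂ} {μ : ℂ}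
    (hA : w ᵥ* A.map (algebraMap ℝ ℂ) = μ • w) (hB : w ᵥ* B.map (algebraMap ℝ ℂ) = 0) :
    w = 0 := by
  have hAkB (k : ℕ) : w ᵥ* (A ^ k * B).map (algebraMap ℝ ℂ) = 0 := by
    induction k with
    | zero => simpa using hB
    | succ k ih => rw [pow_succ', Matrix.mul_assoc, Matrix.map_mul, ← vecMul_vecMul, hA,
        smul_vecMul, ih, smul_zero]
  refine eq_zero_of_vecMul_map_ofReal_eq_zero_of_rank_eq (M := ctrbMatrix A B)
    (by rw [hAB, Fintype.card_fin]) (funext fun kj => ?_)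
  exact congrFun (hAkB kj.1) kj.2

theorem isHurwitz_sub_mul_of_lyapunov {n m p : ℕ} {A : Matrix (Fin n) (Fin n) ℝ}
    {B : Matrix (Fin n) (Fin m) ℝ} {C : Matrix (Fin n) (Fin p) ℝ} {U : Matrix (Fin p) (Fin m) ℝ}
    {K : Matrix (Fin m) (Fin n) ℝ} {S : Matrix (Fin n) (Fin n) ℝ} (hAB : IsControllablePair A B)
    (hBC : B = C * U) (hS : S.PosSemidef)
    (h : (A - B * K) * S + S * (A - B * K)ᵀ + C * Cᵀ = 0) : IsHurwitz (A - B * K) := by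
  intro μ hμ
  by_contra! hμ_re
  obtain ⟨w, hw0, hw⟩ := exists_vecMul_eq_smul_of_mem_spectrum hμ
  have hC : w ᵥ* C.map (algebraMap ℝ ℂ) = 0 := by
    refine vecMul_eq_zero_of_lyapunov hS.map_ofReal ?_ hw hμ_re
    simpa only [map_add, map_zero, RingHom.mapMatrix_apply, Matrix.map_mul, transpose_map_ofReal]
      using congrArg (algebraMap ℝ ℂ).mapMatrix h
  have hB : w ᵥ* B.map (algebraMap ℝ ℂ) = 0 := by
    rw [hBC, Matrix.map_mul, ← vecMul_vecMul, hC, zero_vecMul]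
  have hA : w ᵥ* A.map (algebraMap ℝ ℂ) = μ • w := by
    rw [← sub_add_cancel A (B * K), Matrix.map_add _ (map_add _), vecMul_add, hw, Matrix.map_mul,
      ← vecMul_vecMul, hB, zero_vecMul, add_zero]
  exact hw0 (hAB.eq_zero_of_vecMul_eq_smul hA hB)

theorem sub_mul_lyapunov_eq {R n m : Type*} [CommRing R] [Fintype n] [Fintype m]
    (A : Matrix n n R) (B : Matrix n m R) (K : Matrix m n R) (Q : Matrix n n R)
    {S : Matrix n n R} (hS : Sᵀ = S) :
    (A - B * K) * S + S * (A - B * K)ᵀ + Q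
      = A * S + S * Aᵀ + Q + B * (-(S * Kᵀ))ᵀ + -(S * Kᵀ) * Bᵀ := by
  simp only [transpose_neg, transpose_mul, transpose_sub, transpose_transpose, hS, sub_mul,
    mul_sub, Matrix.mul_neg, Matrix.neg_mul, Matrix.mul_assoc]
  abel

/-- with `(A,B)` controllable and `range B ⊆ range B₁`, a positive
definite `Σ` can be maintained by a stabilizing constant feedback gain `K` iff
the Lyapunov-like equation `AΣ + ΣAᵀ + B₁B₁ᵀ + BXᵀ + XBᵀ = 0` is solvable for `X`. -/
theorem stmt2 {n m p : ℕ} (A : Matrix (Fin n) (Fin n) ℝ) (B : Matrix (Fin n) (Fin m) ℝ)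
    (B₁ : Matrix (Fin n) (Fin p) ℝ) (hAB : IsControllablePair A B)
    (hBB₁ : Set.range B.mulVec ⊆ Set.range B₁.mulVec)
    (S : Matrix (Fin n) (Fin n) ℝ) (hS : S.PosDef) :
    (∃ K : Matrix (Fin m) (Fin n) ℝ, IsHurwitz (A - B * K) ∧
      (A - B * K) * S + S * (A - B * K)ᵀ + B₁ * B₁ᵀ = 0)
    ↔ (∃ X : Matrix (Fin n) (Fin m) ℝ,
        A * S + S * Aᵀ + B₁ * B₁ᵀ + B * Xᵀ + X * Bᵀ = 0) := by
  have hST : Sᵀ = S := hS.isHermitian.eq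
  constructor
  · rintro ⟨K, -, hK⟩
    exact ⟨-(S * Kᵀ), (sub_mul_lyapunov_eq A B K _ hST).symm.trans hK⟩
  · rintro ⟨X, hX⟩
    obtain ⟨U, hBU⟩ := exists_eq_mul_of_range_mulVec_subset hBB₁
    set K := -(Xᵀ * S⁻¹)
    have hSK : -(S * Kᵀ) = X := by
      rw [transpose_neg, transpose_mul, transpose_transpose, transpose_nonsing_inv, hST,
        Matrix.mul_neg, neg_neg, mul_nonsing_inv_cancel_left S X hS.det_pos.ne'.isUnit]
    have hK := (sub_mul_lyapunov_eq A B K (B₁ * B₁ᵀ) hST).trans (hSK ▸ hX)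
    exact ⟨K, isHurwitz_sub_mul_of_lyapunov hAB hBU hS.posSemidef hK, hK⟩
end

section
/- Let B ∈ ℝ^{n×m} and let Π denote the n×n matrix of the orthogonal projection of ℝⁿ onto the orthogonal complement of the column space of B. Consider the linear maps f_B : ℝ^{n×m} → S_n, X ↦ BXᵀ + XBᵀ, and g_B : S_n → S_n, Y ↦ Π Y Π, where S_n is the space of symmetric n×n real matrices. Then the range of f_B equals the null space of g_B; that is, for a symmetric n×n matrix M one has Π M Π = 0 if and only if M = BXᵀ + XBᵀ for some X ∈ ℝ^{n×m}. -/
open Matrix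

/-- with `P` the orthogonal projection onto the orthogonal complement of
the column space of `B` (symmetric idempotent with kernel the column space of `B`),
a symmetric matrix `M` satisfies `P M P = 0` iff `M = BXᵀ + XBᵀ` for some `X`;
i.e., the range of `f_B` equals the null space of `g_B`. -/
theorem stmt3 {n m : ℕ} (B : Matrix (Fin n) (Fin m) ℝ) (P : Matrix (Fin n) (Fin n) ℝ)
    (hPsym : P.IsSymm) (hPidem : P * P = P)
    (hPker : ∀ x : Fin n → ℝ, P.mulVec x = 0 ↔ x ∈ Set.range B.mulVec)
    (M : Matrix (Fin n) (Fin n) ℝ) (hM : M.IsSymm) :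
    P * M * P = 0 ↔ ∃ X : Matrix (Fin n) (Fin m) ℝ, M = B * Xᵀ + X * Bᵀ := by
  have hPB : P * B = 0 := by
    ext i j
    have h := (hPker (B.mulVec (Pi.single j 1))).2 ⟨Pi.single j 1, rfl⟩
    rw [Matrix.mulVec_mulVec] at h
    have := congrFun h i
    simpa [Matrix.mulVec_single] using this
  constructor
  · intro hPMP
    set Y : Matrix (Fin n) (Fin n) ℝ := (1 - P) * M * (1 + P) with hY
    have hPY : P * Y = 0 := by
      have h0 : P * ((1 - P) * M) = 0 := by
        rw [← mul_assoc, mul_sub, mul_one, hPidem, sub_self, zero_mul]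
      rw [hY, ← mul_assoc, h0, zero_mul]
    have hcol : ∀ j, ∃ z : Fin m → ℝ, B.mulVec z = fun i => Y i j := by
      intro j
      have h0 : P.mulVec (fun i => Y i j) = 0 := by
        ext i
        have : (P * Y) i j = 0 := by rw [hPY]; rfl
        simpa [Matrix.mulVec, Matrix.mul_apply, dotProduct] using this
      exact (hPker _).1 h0
    choose z hz using hcol
    set Z : Matrix (Fin m) (Fin n) ℝ := Matrix.of fun k j => z j k with hZdef
    have hBZ : B * Z = Y := by
      ext i j
      have := congrFun (hz j) i
      simpa [hZdef, Matrix.mul_apply, Matrix.mulVec, dotProduct] using this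
    have hMt : Mᵀ = M := hM
    have hPt : Pᵀ = P := hPsym
    have hYt : Y + Yᵀ = M + M := by
      have key : (1 - P) * M * (1 + P) + (1 + P) * M * (1 - P)
          = M + M - (P * M * P + P * M * P) := by noncomm_ring
      rw [hY, Matrix.transpose_mul, Matrix.transpose_mul, Matrix.transpose_add,
        Matrix.transpose_sub, Matrix.transpose_one, hMt, hPt, ← mul_assoc,
        key, hPMP, add_zero, sub_zero]
    refine ⟨(2:ℝ)⁻¹ • Zᵀ, ?_⟩
    rw [Matrix.transpose_smul, Matrix.transpose_transpose, Matrix.mul_smul,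
      Matrix.smul_mul, hBZ, ← Matrix.transpose_mul, hBZ, ← smul_add, hYt]
    ext i j
    simp
    ring
  · rintro ⟨X, rfl⟩
    have hBtP : Bᵀ * P = 0 := by
      have := congrArg Matrix.transpose hPB
      simpa [Matrix.transpose_mul, hPsym.eq] using this
    rw [Matrix.mul_add, Matrix.add_mul]
    have h1 : P * (B * Xᵀ) * P = 0 := by
      rw [← Matrix.mul_assoc, hPB, Matrix.zero_mul, Matrix.zero_mul]
    have h2 : P * (X * Bᵀ) * P = 0 := by
      rw [Matrix.mul_assoc P (X * Bᵀ) P, Matrix.mul_assoc X Bᵀ P, hBtP, Matrix.mul_zero, Matrix.mul_zero]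
    rw [h1, h2, add_zero]
end

section
/- Let A ∈ ℝ^{n×n}, B ∈ ℝ^{n×m}, B₁ ∈ ℝ^{n×p}, and let Σ be a symmetric positive definite n×n matrix. Suppose there exists a symmetric n×n matrix Π such that A − BBᵀΠ is Hurwitz and (A − BBᵀΠ)Σ + Σ(A − BBᵀΠ)ᵀ + B₁B₁ᵀ = 0. Then K* := BᵀΠ satisfies: A − BK* is Hurwitz, (A − BK*)Σ + Σ(A − BK*)ᵀ + B₁B₁ᵀ = 0, and trace(K* Σ (K*)ᵀ) ≤ trace(K Σ Kᵀ) for every K ∈ ℝ^{m×n} such that A − BK is Hurwitz and (A − BK)Σ + Σ(A − BK)ᵀ + B₁B₁ᵀ = 0. -/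
/-!
Write `K = Bᵀ P + D`. Subtracting the two Lyapunov equations shows that `X = S Dᵀ Bᵀ` is
skew-symmetric, so the cross term `trace (Bᵀ P S Dᵀ) = trace (P X)` vanishes because `P` is
symmetric. Hence `trace (K S Kᵀ) = trace ((Bᵀ P) S (Bᵀ P)ᵀ) + trace (D S Dᵀ)`, and the last term
is nonnegative since `S` is positive semidefinite.
-/

open Matrix

namespace Matrix

variable {ι κ R : Type*} [Fintype ι] [Fintype κ]

theorem trace_mul_eq_zero_of_isSymm_of_add_transpose_eq_zero [CommRing R] [NoZeroDivisors R]
    [CharZero R] {P X : Matrix ι ι R} (hP : P.IsSymm) (hX : X + Xᵀ = 0) : (P * X).trace = 0 := by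
  have hskew : (P * X).trace = -(P * X).trace := by
    calc (P * X).trace = (Xᵀ * P).trace := by rw [← trace_transpose, transpose_mul, hP.eq]
      _ = (P * -X).trace := by rw [trace_mul_comm, eq_neg_of_add_eq_zero_right hX]
      _ = -(P * X).trace := by rw [Matrix.mul_neg, trace_neg]
  exact add_self_eq_zero.mp (eq_neg_iff_add_eq_zero.mp hskew)

theorem lyapunov_sub_lyapunov [CommRing R] (A : Matrix ι ι R) (B : Matrix ι κ R)
    (K K₀ : Matrix κ ι R) (S : Matrix ι ι R) :
    (A - B * K) * S + S * (A - B * K)ᵀ - ((A - B * K₀) * S + S * (A - B * K₀)ᵀ)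
      = -(B * (K - K₀) * S + S * (K - K₀)ᵀ * Bᵀ) := by
  simp only [transpose_sub, transpose_mul, Matrix.sub_mul, Matrix.mul_sub, Matrix.mul_assoc]
  abel

theorem trace_mul_mul_transpose_add [CommRing R] {S : Matrix ι ι R} (hS : S.IsSymm)
    (K D : Matrix κ ι R) :
    ((K + D) * S * (K + D)ᵀ).trace
      = (K * S * Kᵀ).trace + 2 * (K * S * Dᵀ).trace + (D * S * Dᵀ).trace := by
  have hswap : (D * S * Kᵀ).trace = (K * S * Dᵀ).trace := by
    rw [← trace_transpose, transpose_mul, transpose_mul, transpose_transpose, hS.eq,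
      Matrix.mul_assoc]
  simp only [transpose_add, Matrix.add_mul, Matrix.mul_add, trace_add, hswap]
  ring

theorem trace_gain_mul_mul_transpose_le {B : Matrix ι κ ℝ} {P S : Matrix ι ι ℝ} (hP : P.IsSymm)
    (hS : S.PosSemidef) {K : Matrix κ ι ℝ}
    (hK : B * (K - Bᵀ * P) * S + S * (K - Bᵀ * P)ᵀ * Bᵀ = 0) :
    ((Bᵀ * P) * S * (Bᵀ * P)ᵀ).trace ≤ (K * S * Kᵀ).trace := by
  set D := K - Bᵀ * P
  have hSsymm : S.IsSymm := isHermitian_iff_isSymm.mp hS.isHermitian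
  have hcross : ((Bᵀ * P) * S * Dᵀ).trace = 0 := by
    rw [show Bᵀ * P * S * Dᵀ = Bᵀ * (P * (S * Dᵀ)) by simp only [Matrix.mul_assoc],
      trace_mul_comm, Matrix.mul_assoc P]
    refine trace_mul_eq_zero_of_isSymm_of_add_transpose_eq_zero hP ?_
    simpa only [transpose_mul, transpose_transpose, hSsymm.eq, ← Matrix.mul_assoc, add_comm]
      using hK
  have hDSD : 0 ≤ (D * S * Dᵀ).trace := by
    simpa using (hS.mul_mul_conjTranspose_same D).trace_nonneg
  rw [← add_sub_cancel (Bᵀ * P) K, trace_mul_mul_transpose_add hSsymm, hcross]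
  linarith

end Matrix

/-- if a symmetric `Π` makes `A − BBᵀΠ` Hurwitz and satisfies the
stationary Lyapunov equation for `Σ`, then `K* = BᵀΠ` is an optimal (minimum
`trace(KΣKᵀ)`) stabilizing gain among those maintaining `Σ`. -/
theorem stmt4 {n m p : ℕ} (A : Matrix (Fin n) (Fin n) ℝ) (B : Matrix (Fin n) (Fin m) ℝ)
    (B₁ : Matrix (Fin n) (Fin p) ℝ)
    (S : Matrix (Fin n) (Fin n) ℝ) (hS : S.PosDef)
    (P : Matrix (Fin n) (Fin n) ℝ) (hPsym : P.IsSymm)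
    (hHur : IsHurwitz (A - B * Bᵀ * P))
    (hLyap : (A - B * Bᵀ * P) * S + S * (A - B * Bᵀ * P)ᵀ + B₁ * B₁ᵀ = 0) :
    IsHurwitz (A - B * (Bᵀ * P)) ∧
    (A - B * (Bᵀ * P)) * S + S * (A - B * (Bᵀ * P))ᵀ + B₁ * B₁ᵀ = 0 ∧
    ∀ K : Matrix (Fin m) (Fin n) ℝ, IsHurwitz (A - B * K) →
      (A - B * K) * S + S * (A - B * K)ᵀ + B₁ * B₁ᵀ = 0 →
      ((Bᵀ * P) * S * (Bᵀ * P)ᵀ).trace ≤ (K * S * Kᵀ).trace := by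
  rw [Matrix.mul_assoc] at hHur hLyap
  refine ⟨hHur, hLyap, fun K _ hK => trace_gain_mul_mul_transpose_le hPsym hS.posSemidef ?_⟩
  have hsame := congrArg (· - B₁ * B₁ᵀ) (hK.trans hLyap.symm)
  simp only [add_sub_cancel_right] at hsame
  rw [← neg_eq_zero, ← lyapunov_sub_lyapunov A, hsame, sub_self]
end

section
/- Let A, B, B₁ : [0,T] → ℝ^{n×n}, ℝ^{n×m}, ℝ^{n×p} be continuous matrix functions. Suppose Π : [0,T] → ℝ^{n×n} is differentiable, symmetric-matrix valued, and satisfies the Riccati equation Π̇(t) = −A(t)ᵀΠ(t) − Π(t)A(t) + Π(t)B(t)B(t)ᵀΠ(t), and suppose Σ : [0,T] → ℝ^{n×n} is differentiable, symmetric-matrix valued, invertible for every t, and satisfies Σ̇(t) = (A(t) − B(t)B(t)ᵀΠ(t))Σ(t) + Σ(t)(A(t) − B(t)B(t)ᵀΠ(t))ᵀ + B₁(t)B₁(t)ᵀ. Then H(t) := Σ(t)⁻¹ − Π(t) satisfies Ḣ(t) = −A(t)ᵀH(t) − H(t)A(t) − H(t)B(t)B(t)ᵀH(t) + (Π(t)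 + H(t))(B(t)B(t)ᵀ − B₁(t)B₁(t)ᵀ)(Π(t) + H(t)) for all t ∈ [0,T]. -/
open Matrix

/-!
Since `d(Σ⁻¹)/dt = -Σ⁻¹ Σ̇ Σ⁻¹`, the Lyapunov equation for `Σ` becomes
`d(Σ⁻¹)/dt = -Σ⁻¹F - FᵀΣ⁻¹ - Σ⁻¹B₁B₁ᵀΣ⁻¹` with `F = A - BBᵀΠ`, where `Fᵀ = Aᵀ - ΠBBᵀ` by symmetry
of `Π` and `BBᵀ`. Subtracting the Riccati equation for `Π` and writing `Σ⁻¹ = Π + H` is then an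
identity in a noncommutative ring that only uses `Σ⁻¹Σ = ΣΣ⁻¹ = 1`.
-/

theorem riccati_inv_sub_identity {R : Type*} [Ring R] {a a' p r q s x : R}
    (hxs : x * s = 1) (hsx : s * x = 1) :
    -(x * ((a - r * p) * s + s * (a' - p * r) + q) * x) - (-a' * p - p * a + p * r * p) =
      -a' * (x - p) - (x - p) * a - (x - p) * r * (x - p)
        + (p + (x - p)) * (r - q) * (p + (x - p)) := by
  have hleft : x * ((a - r * p) * s) * x = x * (a - r * p) := by
    rw [mul_assoc, mul_assoc, hsx, mul_one]
  have hright : x * (s * (a' - p * r)) * x = (a' - p * r) * x := by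
    rw [← mul_assoc, hxs, one_mul]
  rw [mul_add, mul_add, add_mul, add_mul, hleft, hright]
  noncomm_ring

section MatrixCalculus

attribute [local instance] Matrix.normedAddCommGroup Matrix.normedSpace

variable {𝕜 : Type*} [NontriviallyNormedField 𝕜] {m n : Type*} [Fintype n]

theorem Matrix.hasDerivAt_iff {f : 𝕜 → Matrix m n 𝕜} {f' : Matrix m n 𝕜} {t : 𝕜} :
    HasDerivAt f f' t ↔ ∀ i j, HasDerivAt (fun s => f s i j) (f' i j) t :=
  hasDerivAt_pi.trans (forall_congr' fun _ => hasDerivAt_pi)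

theorem HasDerivAt.matrix_inv [CompleteSpace 𝕜] [DecidableEq n] {f : 𝕜 → Matrix n n 𝕜}
    {f' : Matrix n n 𝕜} {t : 𝕜} (hf : HasDerivAt f f' t) (hdet : IsUnit (f t).det) :
    HasDerivAt (fun s => (f s)⁻¹) (-((f t)⁻¹ * f' * (f t)⁻¹)) t := by
  let := Matrix.linftyOpNormedRing (n := n) (α := 𝕜)
  let := Matrix.linftyOpNormedAlgebra (n := n) (R := 𝕜) (α := 𝕜)
  -- The uniformity of this norm is the product one only up to unfolding, which instance search
  -- does not do, so completeness has to be supplied by hand.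
  have : HasSummableGeomSeries (Matrix n n 𝕜) :=
    @instHasSummableGeomSeriesOfCompleteSpace _ _ (FiniteDimensional.complete 𝕜 _)
  obtain ⟨u, hu⟩ := (isUnit_iff_isUnit_det _).mpr hdet
  have hinv := (hu ▸ hasFDerivAt_ringInverse (𝕜 := 𝕜) u).comp_hasDerivAt t hf
  simp only [Function.comp_def, ← nonsing_inv_eq_ringInverse] at hinv
  rw [← hu, ← coe_units_inv]
  exact hinv

theorem HasDerivAt.inv_sub_of_riccati [CompleteSpace 𝕜] [DecidableEq n]
    {P S : 𝕜 → Matrix n n 𝕜} {A R Q : Matrix n n 𝕜} {t : 𝕜}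
    (hPsymm : (P t).IsSymm) (hRsymm : R.IsSymm) (hdet : IsUnit (S t).det)
    (hP : HasDerivAt P (-Aᵀ * P t - P t * A + P t * R * P t) t)
    (hS : HasDerivAt S ((A - R * P t) * S t + S t * (A - R * P t)ᵀ + Q) t) :
    HasDerivAt (fun s => (S s)⁻¹ - P s)
      (-Aᵀ * ((S t)⁻¹ - P t) - ((S t)⁻¹ - P t) * A - ((S t)⁻¹ - P t) * R * ((S t)⁻¹ - P t)
        + (P t + ((S t)⁻¹ - P t)) * (R - Q) * (P t + ((S t)⁻¹ - P t))) t := by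
  have hFt : (A - R * P t)ᵀ = Aᵀ - P t * R := by
    rw [transpose_sub, transpose_mul, hPsymm.eq, hRsymm.eq]
  rw [← riccati_inv_sub_identity (nonsing_inv_mul _ hdet) (mul_nonsing_inv _ hdet), ← hFt]
  exact (hS.matrix_inv hdet).sub hP

end MatrixCalculus

theorem stmt5_general {n m p : ℕ} (T : ℝ)
    (A : ℝ → Matrix (Fin n) (Fin n) ℝ) (B : ℝ → Matrix (Fin n) (Fin m) ℝ)
    (B₁ : ℝ → Matrix (Fin n) (Fin p) ℝ)
    (P : ℝ → Matrix (Fin n) (Fin n) ℝ) (S : ℝ → Matrix (Fin n) (Fin n) ℝ)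
    (hPsym : ∀ t ∈ Set.Icc (0:ℝ) T, (P t).IsSymm)
    (hSinv : ∀ t ∈ Set.Icc (0:ℝ) T, IsUnit (S t).det)
    (hP : ∀ t ∈ Set.Icc (0:ℝ) T, ∀ i j, HasDerivAt (fun s => P s i j)
      ((-(A t)ᵀ * P t - P t * A t + P t * (B t * (B t)ᵀ) * P t) i j) t)
    (hS : ∀ t ∈ Set.Icc (0:ℝ) T, ∀ i j, HasDerivAt (fun s => S s i j)
      (((A t - B t * (B t)ᵀ * P t) * S t + S t * (A t - B t * (B t)ᵀ * P t)ᵀ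
        + B₁ t * (B₁ t)ᵀ) i j) t) :
    ∀ t ∈ Set.Icc (0:ℝ) T, ∀ i j,
      HasDerivAt (fun s => ((S s)⁻¹ - P s) i j)
        ((-(A t)ᵀ * ((S t)⁻¹ - P t) - ((S t)⁻¹ - P t) * A t
          - ((S t)⁻¹ - P t) * (B t * (B t)ᵀ) * ((S t)⁻¹ - P t)
          + (P t + ((S t)⁻¹ - P t)) * (B t * (B t)ᵀ - B₁ t * (B₁ t)ᵀ)
            * (P t + ((S t)⁻¹ - P t))) i j) t := by
  intro t ht
  have hBBsymm : (B t * (B t)ᵀ).IsSymm := by rw [IsSymm, transpose_mul, transpose_transpose]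
  exact Matrix.hasDerivAt_iff.mp <|
    HasDerivAt.inv_sub_of_riccati (hPsym t ht) hBBsymm (hSinv t ht)
      (Matrix.hasDerivAt_iff.mpr (hP t ht)) (Matrix.hasDerivAt_iff.mpr (hS t ht))

/-- if `Π(t)` solves the Riccati equation
`Π̇ = −AᵀΠ − ΠA + ΠBBᵀΠ` and `Σ(t)` (symmetric, invertible) solves
`Σ̇ = (A−BBᵀΠ)Σ + Σ(A−BBᵀΠ)ᵀ + B₁B₁ᵀ`, then `H := Σ⁻¹ − Π` satisfies
`Ḣ = −AᵀH − HA − HBBᵀH + (Π+H)(BBᵀ−B₁B₁ᵀ)(Π+H)` on `[0,T]`.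
All derivatives/continuity are entrywise. -/
theorem stmt5 {n m p : ℕ} (T : ℝ)
    (A : ℝ → Matrix (Fin n) (Fin n) ℝ) (B : ℝ → Matrix (Fin n) (Fin m) ℝ)
    (B₁ : ℝ → Matrix (Fin n) (Fin p) ℝ)
    (hA : ∀ i j, ContinuousOn (fun t => A t i j) (Set.Icc 0 T))
    (hB : ∀ i j, ContinuousOn (fun t => B t i j) (Set.Icc 0 T))
    (hB₁ : ∀ i j, ContinuousOn (fun t => B₁ t i j) (Set.Icc 0 T))
    (P : ℝ → Matrix (Fin n) (Fin n) ℝ) (S : ℝ → Matrix (Fin n) (Fin n) ℝ)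
    (hPsym : ∀ t ∈ Set.Icc (0:ℝ) T, (P t).IsSymm)
    (hSsym : ∀ t ∈ Set.Icc (0:ℝ) T, (S t).IsSymm)
    (hSinv : ∀ t ∈ Set.Icc (0:ℝ) T, IsUnit (S t).det)
    (hP : ∀ t ∈ Set.Icc (0:ℝ) T, ∀ i j, HasDerivAt (fun s => P s i j)
      ((-(A t)ᵀ * P t - P t * A t + P t * (B t * (B t)ᵀ) * P t) i j) t)
    (hS : ∀ t ∈ Set.Icc (0:ℝ) T, ∀ i j, HasDerivAt (fun s => S s i j)
      (((A t - B t * (B t)ᵀ * P t) * S t + S t * (A t - B t * (B t)ᵀ * P t)ᵀ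
        + B₁ t * (B₁ t)ᵀ) i j) t) :
    ∀ t ∈ Set.Icc (0:ℝ) T, ∀ i j,
      HasDerivAt (fun s => ((S s)⁻¹ - P s) i j)
        ((-(A t)ᵀ * ((S t)⁻¹ - P t) - ((S t)⁻¹ - P t) * A t
          - ((S t)⁻¹ - P t) * (B t * (B t)ᵀ) * ((S t)⁻¹ - P t)
          + (P t + ((S t)⁻¹ - P t)) * (B t * (B t)ᵀ - B₁ t * (B₁ t)ᵀ)
            * (P t + ((S t)⁻¹ - P t))) i j) t :=
  stmt5_general T A B B₁ P S hPsym hSinv hP hS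
end

section
/- Let F : [0,T] → ℝ^{n×n} and Q : [0,T] → ℝ^{n×n} be continuous, with Q(t) symmetric positive semidefinite for every t ∈ [0,T]. Suppose Σ : [0,T] → ℝ^{n×n} is differentiable, symmetric-matrix valued, satisfies Σ̇(t) = F(t)Σ(t) + Σ(t)F(t)ᵀ + Q(t) for all t ∈ [0,T], and Σ(0) is positive definite. Then Σ(t) is positive definite for every t ∈ [0,T]. -/
open Matrix

open Set Filter Topology

/-!
By Jacobi's formula, along the Lyapunov flow `d/dt det Σ = 2 tr F · det Σ + tr (adj Σ · Q)`, and
the last term is nonnegative while `Σ ≻ 0`. So if `-tr F ≤ c` on `[0, T]`, then `det Σ(t) e^{2ct}`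
is nondecreasing as long as `Σ` stays positive definite. Continuous induction on the closed
condition "`Σ(t) ⪰ 0` and `det Σ(t) e^{2ct} ≥ det Σ(0)`" finishes the proof: at such a `t` the
matrix `Σ(t)` is positive semidefinite with positive determinant, hence positive definite;
positive definiteness is open among symmetric matrices, and the monotonicity carries the
condition a little further to the right.
-/

namespace Matrix

variable {n : Type*} [Fintype n]

theorem isClosed_setOf_posSemidef : IsClosed {M : Matrix n n ℝ | M.PosSemidef} := by
  simp only [posSemidef_iff_dotProduct_mulVec, ofPred_and, ofPred_forall]
  refine .inter (isClosed_eq continuous_id.matrix_conjTranspose continuous_id) ?_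
  exact isClosed_iInter fun x => isClosed_le continuous_const
    (continuous_const.dotProduct (continuous_id.matrix_mulVec continuous_const))

theorem PosDef.eventually_posDef {M : Matrix n n ℝ} (hM : M.PosDef) :
    ∀ᶠ N in 𝓝 M, N.IsHermitian → N.PosDef := by
  have hq : Continuous fun p : Matrix n n ℝ × (n → ℝ) => p.2 ⬝ᵥ p.1 *ᵥ p.2 :=
    continuous_snd.dotProduct (continuous_fst.matrix_mulVec continuous_snd)
  have hsphere : ∀ᶠ N in 𝓝 M, ∀ u ∈ Metric.sphere (0 : n → ℝ) 1, 0 < u ⬝ᵥ N *ᵥ u := by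
    refine (isCompact_sphere 0 1).eventually_forall_of_forall_eventually fun u hu => ?_
    have hu0 : u ≠ 0 := ne_zero_of_mem_unit_sphere (⟨u, hu⟩ : Metric.sphere (0 : n → ℝ) 1)
    exact continuousAt_const.eventually_lt hq.continuousAt
      (by simpa using hM.dotProduct_mulVec_pos hu0)
  filter_upwards [hsphere] with N hN hNh
  refine .of_dotProduct_mulVec_pos hNh fun x hx => ?_
  have hxn : ‖x‖ ≠ 0 := norm_ne_zero_iff.mpr hx
  have hu : ‖x‖⁻¹ • x ∈ Metric.sphere (0 : n → ℝ) 1 := by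
    simp [norm_smul, hxn]
  have := hN _ hu
  simp only [mulVec_smul, dotProduct_smul, smul_dotProduct, smul_eq_mul] at this
  simpa using pos_of_mul_pos_right (pos_of_mul_pos_right this (by positivity)) (by positivity)

theorem PosSemidef.trace_mul_nonneg {A B : Matrix n n ℝ} (hA : A.PosSemidef)
    (hB : B.PosSemidef) : 0 ≤ (A * B).trace := by
  classical
  obtain ⟨C, rfl⟩ : ∃ C : Matrix n n ℝ, A = star C * C := by
    open scoped MatrixOrder in exact CStarAlgebra.nonneg_iff_eq_star_mul_self.mp hA.nonneg
  rw [Matrix.mul_assoc, trace_mul_comm, Matrix.mul_assoc, ← Matrix.mul_assoc]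
  exact (hB.mul_mul_conjTranspose_same C).trace_nonneg

variable [DecidableEq n]

theorem PosDef.trace_adjugate_mul_nonneg {A B : Matrix n n ℝ} (hA : A.PosDef)
    (hB : B.PosSemidef) : 0 ≤ (adjugate A * B).trace := by
  have hadj : adjugate A = A.det • A⁻¹ := by
    rw [inv_def, smul_smul, Ring.mul_inverse_cancel _ (isUnit_iff_ne_zero.mpr hA.det_pos.ne'),
      one_smul]
  rw [hadj, smul_mul, trace_smul, smul_eq_mul]
  exact mul_nonneg hA.det_pos.le (hA.inv.posSemidef.trace_mul_nonneg hB)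


theorem trace_adjugate_mul_lyapunov {R : Type*} [CommRing R] (A F Q : Matrix n n R) :
    (adjugate A * (F * A + A * Fᵀ + Q)).trace = 2 * A.det * F.trace + (adjugate A * Q).trace := by
  have hFA : (adjugate A * (F * A)).trace = A.det * F.trace := by
    rw [← Matrix.mul_assoc, trace_mul_cycle, mul_adjugate, smul_mul, Matrix.one_mul, trace_smul,
      smul_eq_mul]
  have hAF : (adjugate A * (A * Fᵀ)).trace = A.det * F.trace := by
    rw [← Matrix.mul_assoc, adjugate_mul, smul_mul, Matrix.one_mul, trace_smul, smul_eq_mul,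
      trace_transpose]
  rw [Matrix.mul_add, Matrix.mul_add, trace_add, trace_add, hFA, hAF]
  ring

theorem sum_det_updateRow {R : Type*} [CommRing R] (A B : Matrix n n R) :
    ∑ i, (A.updateRow i (B i)).det = (adjugate A * B).trace := by
  simp only [← cramer_transpose_apply, cramer_eq_adjugate_mulVec, ← adjugate_transpose,
    mulVec, dotProduct, transpose_apply, trace, diag, mul_apply]
  rw [Finset.sum_comm]

theorem hasDerivAt_det {𝕜 : Type*} [NontriviallyNormedField 𝕜] {M : 𝕜 → Matrix n n 𝕜}
    {M' : Matrix n n 𝕜} {t : 𝕜} (h : ∀ i j, HasDerivAt (fun s => M s i j) (M' i j) t) :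
    HasDerivAt (fun s => (M s).det) (adjugate (M t) * M').trace t := by
  let detMultilinear : ContinuousMultilinearMap 𝕜 (fun _ : n => n → 𝕜) 𝕜 :=
    ⟨(detRowAlternating (R := 𝕜) (n := n)).toMultilinearMap,
      continuous_id.matrix_det⟩
  have hrows : ∀ i, HasDerivAt (fun s => M s i) (M' i) t := fun i => hasDerivAt_pi.2 (h i)
  rw [← sum_det_updateRow]
  refine (HasFDerivAt.multilinear_comp (f := detMultilinear)
    fun i => (hrows i).hasFDerivAt).hasDerivAt.congr_deriv ?_
  simp only [_root_.sum_apply, ContinuousLinearMap.comp_apply,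
    ContinuousLinearMap.toSpanSingleton_apply, one_smul,
    ContinuousMultilinearMap.toContinuousLinearMap_apply]
  rfl

end Matrix

theorem monotoneOn_mul_exp_of_neg_mul_le_deriv {f f' : ℝ → ℝ} {a b c : ℝ}
    (hcont : ContinuousOn f (Icc a b)) (hderiv : ∀ x ∈ Ioo a b, HasDerivAt f (f' x) x)
    (hle : ∀ x ∈ Ioo a b, -(c * f x) ≤ f' x) :
    MonotoneOn (fun x => f x * Real.exp (c * x)) (Icc a b) := by
  have hexp : ∀ x, HasDerivAt (fun x => Real.exp (c * x)) (Real.exp (c * x) * c) x := fun x => by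
    simpa using ((hasDerivAt_id x).const_mul c).exp
  refine monotoneOn_of_hasDerivWithinAt_nonneg (convex_Icc a b)
    (f' := fun x => f' x * Real.exp (c * x) + f x * (Real.exp (c * x) * c))
    (hcont.mul (Real.continuous_exp.comp (continuous_const_mul c)).continuousOn)
    (fun x hx => ?_) (fun x hx => ?_)
  · rw [interior_Icc] at hx ⊢
    exact ((hderiv x hx).mul (hexp x)).hasDerivWithinAt
  · rw [interior_Icc] at hx
    have := hle x hx
    have := Real.exp_pos (c * x)
    nlinarith

section Lyapunov

variable {n : Type*} [Fintype n] [DecidableEq n]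

theorem monotoneOn_det_mul_exp_of_lyapunov {F Q S : ℝ → Matrix n n ℝ} {a b c : ℝ}
    (hQ : ∀ t ∈ Ioo a b, (Q t).PosSemidef) (hc : ∀ t ∈ Ioo a b, -c ≤ (F t).trace)
    (hS : ∀ t ∈ Icc a b, ∀ i j,
      HasDerivAt (fun s => S s i j) ((F t * S t + S t * (F t)ᵀ + Q t) i j) t)
    (hpos : ∀ t ∈ Ioo a b, (S t).PosDef) :
    MonotoneOn (fun t => (S t).det * Real.exp (2 * c * t)) (Icc a b) := by
  have hdet : ∀ t ∈ Icc a b, HasDerivAt (fun s => (S s).det)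
      (adjugate (S t) * (F t * S t + S t * (F t)ᵀ + Q t)).trace t :=
    fun t ht => hasDerivAt_det (hS t ht)
  refine monotoneOn_mul_exp_of_neg_mul_le_deriv
    (fun t ht => (hdet t ht).continuousAt.continuousWithinAt)
    (fun t ht => hdet t (Ioo_subset_Icc_self ht)) fun t ht => ?_
  rw [trace_adjugate_mul_lyapunov]
  have hdet_pos := (hpos t ht).det_pos
  have := (hpos t ht).trace_adjugate_mul_nonneg (hQ t ht)
  have := hc t ht
  nlinarith

theorem posDef_of_lyapunov {F Q S : ℝ → Matrix n n ℝ} {a b c : ℝ}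
    (hQ : ∀ t ∈ Icc a b, (Q t).PosSemidef) (hc : ∀ t ∈ Icc a b, -c ≤ (F t).trace)
    (hsymm : ∀ t ∈ Icc a b, (S t).IsHermitian)
    (hS : ∀ t ∈ Icc a b, ∀ i j,
      HasDerivAt (fun s => S s i j) ((F t * S t + S t * (F t)ᵀ + Q t) i j) t)
    (ha : (S a).PosDef) :
    ∀ t ∈ Icc a b, (S t).PosDef := by
  set g := fun t => (S t).det * Real.exp (2 * c * t)
  set s := {t | (S t).PosSemidef ∧ g a ≤ g t}
  have hScont : ∀ t ∈ Icc a b, ContinuousAt S t := fun t ht =>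
    continuousAt_pi.2 fun i => continuousAt_pi.2 fun j => (hS t ht i j).continuousAt
  have hgcont : ContinuousOn g (Icc a b) := fun t ht =>
    ((hasDerivAt_det (hS t ht)).continuousAt.mul (Real.continuous_exp.comp
      (continuous_const_mul _)).continuousAt).continuousWithinAt
  have hclosed : IsClosed (s ∩ Icc a b) := by
    have h1 := ContinuousOn.preimage_isClosed_of_isClosed
      (fun t ht => (hScont t ht).continuousWithinAt) isClosed_Icc isClosed_setOf_posSemidef
    have h2 := hgcont.preimage_isClosed_of_isClosed isClosed_Icc (isClosed_Ici (a := g a))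
    convert h1.inter h2 using 1
    ext t
    simp only [s, mem_inter_iff, mem_preimage, mem_ofPred_eq, mem_Ici]
    tauto
  have hpd : ∀ t ∈ s, (S t).PosDef := by
    rintro t ⟨hpsd, hle⟩
    have hg : 0 < g t := (mul_pos ha.det_pos (Real.exp_pos _)).trans_le hle
    exact hpsd.posDef_iff_det_ne_zero.mpr (pos_of_mul_pos_left hg (Real.exp_pos _).le).ne'
  have hstep : ∀ t ∈ s ∩ Ico a b, s ∈ 𝓝[>] t := by
    rintro t ⟨hts, htab⟩
    have hev : ∀ᶠ u in 𝓝[>] t, u < b ∧ (S u).PosDef := by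
      filter_upwards [Ioo_mem_nhdsGT htab.2, nhdsWithin_le_nhds
        ((hScont t (Ico_subset_Icc_self htab)).eventually (hpd t hts).eventually_posDef)]
        with u hu hu_pd
      exact ⟨hu.2, hu_pd (hsymm u ⟨htab.1.trans hu.1.le, hu.2.le⟩)⟩
    obtain ⟨m, hm, hsub⟩ := mem_nhdsGT_iff_exists_Ioo_subset.mp hev
    filter_upwards [Ioo_mem_nhdsGT hm] with u hu
    have hsub_ab : Icc t u ⊆ Icc a b := Icc_subset_Icc htab.1 (hsub hu).1.le
    have hmono : MonotoneOn g (Icc t u) :=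
      monotoneOn_det_mul_exp_of_lyapunov (fun r hr => hQ r (hsub_ab (Ioo_subset_Icc_self hr)))
        (fun r hr => hc r (hsub_ab (Ioo_subset_Icc_self hr))) (fun r hr => hS r (hsub_ab hr))
        (fun r hr => (hsub ⟨hr.1, hr.2.trans hu.2⟩).2)
    exact ⟨(hsub hu).2.posSemidef, hts.2.trans (hmono (left_mem_Icc.2 hu.1.le)
      (right_mem_Icc.2 hu.1.le) hu.1.le)⟩
  exact fun t ht => hpd t (hclosed.Icc_subset_of_forall_mem_nhdsWithin ⟨ha.posSemidef, le_rfl⟩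
    hstep ht)

end Lyapunov

theorem stmt6_general {n : ℕ} (T : ℝ)
    (F Q : ℝ → Matrix (Fin n) (Fin n) ℝ)
    (hF : ∀ i j, ContinuousOn (fun t => F t i j) (Set.Icc 0 T))
    (hQ : ∀ t ∈ Set.Icc (0:ℝ) T, (Q t).PosSemidef)
    (S : ℝ → Matrix (Fin n) (Fin n) ℝ)
    (hSsym : ∀ t ∈ Set.Icc (0:ℝ) T, (S t).IsSymm)
    (hS : ∀ t ∈ Set.Icc (0:ℝ) T, ∀ i j, HasDerivAt (fun s => S s i j)
      ((F t * S t + S t * (F t)ᵀ + Q t) i j) t)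
    (h0 : (S 0).PosDef) :
    ∀ t ∈ Set.Icc (0:ℝ) T, (S t).PosDef := by
  obtain ⟨c, hc⟩ := isCompact_Icc.exists_bound_of_continuousOn
    (continuousOn_finsetSum _ fun i _ => hF i i : ContinuousOn (fun t => (F t).trace) (Icc 0 T))
  exact posDef_of_lyapunov hQ (fun t ht => neg_le_of_abs_le (hc t ht))
    (fun t ht => isHermitian_iff_isSymm.mpr (hSsym t ht)) hS h0

/-- a symmetric solution of the Lyapunov differential equation
`Σ̇ = FΣ + ΣFᵀ + Q` with `Q(t) ⪰ 0` and `Σ(0) ≻ 0` stays positive definite on `[0,T]`. -/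
theorem stmt6 {n : ℕ} (T : ℝ)
    (F Q : ℝ → Matrix (Fin n) (Fin n) ℝ)
    (hF : ∀ i j, ContinuousOn (fun t => F t i j) (Set.Icc 0 T))
    (hQcont : ∀ i j, ContinuousOn (fun t => Q t i j) (Set.Icc 0 T))
    (hQ : ∀ t ∈ Set.Icc (0:ℝ) T, (Q t).PosSemidef)
    (S : ℝ → Matrix (Fin n) (Fin n) ℝ)
    (hSsym : ∀ t ∈ Set.Icc (0:ℝ) T, (S t).IsSymm)
    (hS : ∀ t ∈ Set.Icc (0:ℝ) T, ∀ i j, HasDerivAt (fun s => S s i j)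
      ((F t * S t + S t * (F t)ᵀ + Q t) i j) t)
    (h0 : (S 0).PosDef) :
    ∀ t ∈ Set.Icc (0:ℝ) T, (S t).PosDef :=
  stmt6_general T F Q hF hQ S hSsym hS h0
end

section
/- The matrix fractional function (U, Σ) ↦ trace(Uᵀ Σ⁻¹ U) is jointly convex on ℝ^{n×m} × {symmetric positive definite n×n matrices}: for all U₁, U₂ ∈ ℝ^{n×m}, all symmetric positive definite n×n matrices Σ₁, Σ₂, and all λ ∈ [0,1], trace((λU₁ + (1−λ)U₂)ᵀ (λΣ₁ + (1−λ)Σ₂)⁻¹ (λU₁ + (1−λ)U₂)) ≤ λ·trace(U₁ᵀ Σ₁⁻¹ U₁) + (1−λ)·trace(U₂ᵀ Σ₂⁻¹ U₂). -/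
/-!
For positive definite `S`, completing the square gives
`tr(Uᵀ S⁻¹ U) = max_X (2 tr(Xᵀ U) - tr(Xᵀ S X))`, the maximum being attained at `X = S⁻¹ U`.
Each function under the maximum is linear in the pair `(U, S)`, so the matrix fractional
function is a pointwise supremum of linear functions, hence jointly convex: evaluate the
maximiser at the convex combination and bound each of the two linear pieces by the maximum.
-/

open Matrix

lemma Matrix.PosDef.smul_add_smul {n : Type*} [Fintype n] {A B : Matrix n n ℝ}
    (hA : A.PosDef) (hB : B.PosDef) {a b : ℝ} (ha : 0 ≤ a) (hb : 0 ≤ b) (hab : a + b = 1) :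
    (a • A + b • B).PosDef := by
  rcases ha.eq_or_lt with rfl | ha
  · obtain rfl : b = 1 := by linarith
    simpa using hB
  · exact (hA.smul ha).add_posSemidef (hB.posSemidef.smul hb)

section MatrixFractional

variable {n m : Type*} [Fintype n] [Fintype m]

def matrixFracMinorant (X U : Matrix n m ℝ) (S : Matrix n n ℝ) : ℝ :=
  2 * (Xᵀ * U).trace - (Xᵀ * S * X).trace

lemma matrixFracMinorant_smul_add_smul (X U₁ U₂ : Matrix n m ℝ) (S₁ S₂ : Matrix n n ℝ)
    (a b : ℝ) :
    matrixFracMinorant X (a • U₁ + b • U₂) (a • S₁ + b • S₂)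
      = a * matrixFracMinorant X U₁ S₁ + b * matrixFracMinorant X U₂ S₂ := by
  simp only [matrixFracMinorant, Matrix.mul_add, Matrix.add_mul, Matrix.mul_smul,
    Matrix.smul_mul, trace_add, trace_smul, smul_eq_mul]
  ring

variable [DecidableEq n]

lemma matrixFracMinorant_le {S : Matrix n n ℝ} (hS : S.PosDef) (X U : Matrix n m ℝ) :
    matrixFracMinorant X U S ≤ (Uᵀ * S⁻¹ * U).trace := by
  have hSinv : S * S⁻¹ = 1 := mul_nonsing_inv S hS.det_pos.ne'.isUnit
  have hSsymm : Sᵀ = S := by simpa using hS.isHermitian.eq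
  set A := S⁻¹ * U
  have hSA : S * A = U := by rw [← Matrix.mul_assoc, hSinv, Matrix.one_mul]
  have hAS : Aᵀ * S = Uᵀ := by
    rw [← hSsymm, ← transpose_mul, hSA]
  have hsq : 0 ≤ ((X - A)ᵀ * S * (X - A)).trace := by
    simpa using (hS.posSemidef.conjTranspose_mul_mul_same (X - A)).trace_nonneg
  have hexpand : (X - A)ᵀ * S * (X - A) = Xᵀ * S * X - Xᵀ * U - (Xᵀ * U)ᵀ + Uᵀ * S⁻¹ * U := by
    rw [transpose_mul, transpose_sub, Matrix.sub_mul, Matrix.sub_mul, Matrix.mul_sub,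
      Matrix.mul_sub, hAS, Matrix.mul_assoc Xᵀ S A, hSA, transpose_transpose, Matrix.mul_assoc Uᵀ]
    abel
  rw [hexpand] at hsq
  simp only [trace_add, trace_sub, trace_transpose] at hsq
  unfold matrixFracMinorant
  linarith

lemma matrixFracMinorant_inv_mul_self {S : Matrix n n ℝ} (hS : S.PosDef) (U : Matrix n m ℝ) :
    matrixFracMinorant (S⁻¹ * U) U S = (Uᵀ * S⁻¹ * U).trace := by
  have hSsymm : Sᵀ = S := by simpa using hS.isHermitian.eq
  have hSinv : S⁻¹ * S = 1 := nonsing_inv_mul S hS.det_pos.ne'.isUnit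
  rw [matrixFracMinorant, transpose_mul, transpose_nonsing_inv, hSsymm, Matrix.mul_assoc Uᵀ S⁻¹ S,
    hSinv, Matrix.mul_one, ← Matrix.mul_assoc]
  ring

end MatrixFractional

/-- joint convexity of the matrix fractional function
`(U,Σ) ↦ trace(Uᵀ Σ⁻¹ U)` on `ℝ^{n×m} ×` (positive definite matrices). -/
theorem stmt11 {n m : ℕ} (U₁ U₂ : Matrix (Fin n) (Fin m) ℝ)
    (S₁ S₂ : Matrix (Fin n) (Fin n) ℝ) (hS₁ : S₁.PosDef) (hS₂ : S₂.PosDef)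
    (l : ℝ) (hl0 : 0 ≤ l) (hl1 : l ≤ 1) :
    ((l • U₁ + (1 - l) • U₂)ᵀ * (l • S₁ + (1 - l) • S₂)⁻¹
        * (l • U₁ + (1 - l) • U₂)).trace
      ≤ l * (U₁ᵀ * S₁⁻¹ * U₁).trace + (1 - l) * (U₂ᵀ * S₂⁻¹ * U₂).trace := by
  set U := l • U₁ + (1 - l) • U₂
  set S := l • S₁ + (1 - l) • S₂
  have hS : S.PosDef := hS₁.smul_add_smul hS₂ hl0 (sub_nonneg.mpr hl1) (by ring)
  calc (Uᵀ * S⁻¹ * U).trace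
      = matrixFracMinorant (S⁻¹ * U) U S := (matrixFracMinorant_inv_mul_self hS U).symm
    _ = l * matrixFracMinorant (S⁻¹ * U) U₁ S₁ + (1 - l) * matrixFracMinorant (S⁻¹ * U) U₂ S₂ :=
      matrixFracMinorant_smul_add_smul _ _ _ _ _ _ _
    _ ≤ l * (U₁ᵀ * S₁⁻¹ * U₁).trace + (1 - l) * (U₂ᵀ * S₂⁻¹ * U₂).trace := by
      gcongr
      · exact matrixFracMinorant_le hS₁ _ _
      · exact matrixFracMinorant_le hS₂ _ _
end

section
/- Let W be a symmetric n×n real matrix and B ∈ ℝ^{n×m}. Then there exists X ∈ ℝ^{n×m} with W = BXᵀ + XBᵀ if and only if the rank of the (n+m)×(n+m) block matrix [[W, B],[Bᵀ, 0]] equals the rank of the block matrix [[0, B],[Bᵀ, 0]] (the latter rank being 2·rank(B)). -/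
/-!
Conjugating by the unimodular matrix `[[1, X], [0, 1]]` replaces the block `W` by
`W - BXᵀ - XBᵀ` without changing the rank. Conversely, with `P` the orthogonal projection onto
the column space of `B`, every symmetric `W` splits as `BXᵀ + XBᵀ + N` with
`N = (1 - P) W (1 - P)` symmetric and `NB = 0`. The square of the symmetric matrix
`[[N, B], [Bᵀ, 0]]` is block diagonal, `diag(NNᵀ + BBᵀ, BᵀB)`, so its rank is
`rank N + 2 rank B`, and the rank condition forces `N = 0`.
-/

open Matrix

namespace Matrix

variable {K : Type*} [Field K] {l m n p q : Type*}

theorem eq_zero_of_rank_eq_zero [Fintype n] [DecidableEq n] {A : Matrix m n K}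
    (h : A.rank = 0) : A = 0 := by
  rw [rank, Submodule.finrank_eq_zero, LinearMap.range_eq_bot] at h
  ext i j
  simpa using congr_fun (LinearMap.congr_fun h (Pi.single j 1)) i

theorem range_mulVecLin_fromCols [Fintype m] [Fintype n] (A : Matrix l m K) (B : Matrix l n K) :
    LinearMap.range (fromCols A B).mulVecLin =
      LinearMap.range A.mulVecLin ⊔ LinearMap.range B.mulVecLin := by
  simp only [range_mulVecLin]
  rw [Sum.range_eq, Submodule.span_union]
  rfl

theorem exists_mul_eq_of_range_le [Fintype m] [Fintype n] [DecidableEq n]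
    {A : Matrix l m K} {B : Matrix l n K}
    (h : LinearMap.range B.mulVecLin ≤ LinearMap.range A.mulVecLin) :
    ∃ C : Matrix m n K, A * C = B := by
  have hcol (j : n) : ∃ c : m → K, A *ᵥ c = B *ᵥ Pi.single j 1 := h ⟨_, rfl⟩
  choose c hc using hcol
  refine ⟨(of c)ᵀ, ?_⟩
  ext i j
  have hij := congr_fun (hc j) i
  rw [mulVec_single_one] at hij
  simpa [mul_apply, mulVec, dotProduct] using hij

theorem rank_fromBlocks_mul_transpose_add_add {R : Type*} [CommRing R] [Fintype l] [Fintype m]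
    [DecidableEq l] [DecidableEq m] (B X : Matrix l m R) (N : Matrix l l R) :
    (fromBlocks (B * Xᵀ + X * Bᵀ + N) B Bᵀ 0).rank = (fromBlocks N B Bᵀ 0).rank := by
  set L : Matrix (l ⊕ m) (l ⊕ m) R := fromBlocks 1 X 0 1
  have hL : IsUnit L.det := by simp [L]
  have hcongr : fromBlocks (B * Xᵀ + X * Bᵀ + N) B Bᵀ 0 = L * fromBlocks N B Bᵀ 0 * Lᵀ := by
    simp only [L, fromBlocks_transpose, fromBlocks_multiply, transpose_one, transpose_zero,
      Matrix.one_mul, Matrix.mul_one, Matrix.zero_mul, Matrix.mul_zero, add_zero, zero_add]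
    congr 1
    abel
  rw [hcongr, rank_mul_eq_left_of_isUnit_det _ _ (by rwa [det_transpose]),
    rank_mul_eq_right_of_isUnit_det _ _ hL]

variable [LinearOrder K] [IsStrictOrderedRing K]

theorem rank_fromCols_of_transpose_mul_eq_zero [Fintype l] [Fintype m] [Fintype n]
    (A : Matrix l m K) (B : Matrix l n K) (h : Aᵀ * B = 0) :
    (fromCols A B).rank = A.rank + B.rank := by
  have hdisj : Disjoint (LinearMap.range A.mulVecLin) (LinearMap.range B.mulVecLin) := by
    rw [Submodule.disjoint_def]
    rintro _ ⟨u, rfl⟩ ⟨v, hv⟩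
    simp only [mulVecLin_apply] at hv ⊢
    apply dotProduct_self_eq_zero.mp
    calc A *ᵥ u ⬝ᵥ A *ᵥ u = A *ᵥ u ⬝ᵥ B *ᵥ v := by rw [hv]
      _ = u ⬝ᵥ (Aᵀ * B) *ᵥ v := by rw [← mulVec_mulVec, dotProduct_mulVec u, vecMul_transpose]
      _ = 0 := by rw [h, zero_mulVec, dotProduct_zero]
  have := Submodule.finrank_sup_add_finrank_inf_eq
    (LinearMap.range A.mulVecLin) (LinearMap.range B.mulVecLin)
  rwa [hdisj.eq_bot, finrank_bot, add_zero, ← range_mulVecLin_fromCols] at this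

theorem rank_fromRows_zero_right [Fintype l] [Fintype m] [Fintype n] (A : Matrix l m K) :
    (fromRows A (0 : Matrix n m K)).rank = A.rank := by
  rw [← rank_transpose_mul_self, transpose_fromRows, fromCols_mul_fromRows, transpose_zero,
    Matrix.zero_mul, add_zero, rank_transpose_mul_self]

theorem rank_fromRows_zero_left [Fintype l] [Fintype m] [Fintype n] (A : Matrix l m K) :
    (fromRows (0 : Matrix n m K) A).rank = A.rank := by
  rw [← rank_transpose_mul_self, transpose_fromRows, fromCols_mul_fromRows, transpose_zero,
    Matrix.zero_mul, zero_add, rank_transpose_mul_self]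

theorem rank_fromBlocks_zero_zero [Fintype l] [Fintype m] [Fintype p] [Fintype q]
    (A : Matrix l m K) (D : Matrix p q K) :
    (fromBlocks A 0 0 D).rank = A.rank + D.rank := by
  rw [← fromCols_fromRows_eq_fromBlocks, rank_fromCols_of_transpose_mul_eq_zero,
    rank_fromRows_zero_right, rank_fromRows_zero_left]
  simp [transpose_fromRows, fromCols_mul_fromRows]

theorem rank_fromBlocks_of_isSymm_of_mul_eq_zero [Fintype l] [Fintype m]
    {N : Matrix l l K} (hN : N.IsSymm) {B : Matrix l m K} (hNB : N * B = 0) :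
    (fromBlocks N B Bᵀ 0).rank = N.rank + 2 * B.rank := by
  have hBN : Bᵀ * N = 0 := by rw [← hN.eq, ← transpose_mul, hNB, transpose_zero]
  have hsq : fromBlocks N B Bᵀ 0 * (fromBlocks N B Bᵀ 0)ᵀ =
      fromBlocks (fromCols N B * (fromCols N B)ᵀ) 0 0 (Bᵀ * B) := by
    simp [fromBlocks_transpose, fromBlocks_multiply, transpose_fromCols, fromCols_mul_fromRows,
      hN.eq, hNB, hBN]
  rw [← rank_self_mul_transpose, hsq, rank_fromBlocks_zero_zero, rank_self_mul_transpose,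
    rank_transpose_mul_self, rank_fromCols_of_transpose_mul_eq_zero N B (by rwa [hN.eq])]
  ring

theorem exists_transpose_mul_self_mul_eq_transpose [Fintype l] [Fintype m] [DecidableEq l]
    (B : Matrix l m K) : ∃ C : Matrix m l K, Bᵀ * B * C = Bᵀ := by
  refine exists_mul_eq_of_range_le (Submodule.eq_of_le_of_finrank_eq ?_ ?_).ge
  · rw [mulVecLin_mul]
    exact LinearMap.range_comp_le_range _ _
  · change (Bᵀ * B).rank = Bᵀ.rank
    rw [rank_transpose_mul_self, rank_transpose]

theorem exists_isSymm_mul_mul_eq_self [Fintype l] [Fintype m] [DecidableEq l]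
    (B : Matrix l m K) : ∃ C : Matrix m l K, (B * C).IsSymm ∧ B * C * B = B := by
  -- `B * C` is the orthogonal projection `B (BᵀB)⁺ Bᵀ` onto the column space of `B`.
  obtain ⟨C, hC⟩ := exists_transpose_mul_self_mul_eq_transpose B
  have hCt : Cᵀ * (Bᵀ * B) = B := by
    simpa [transpose_mul, Matrix.mul_assoc] using congrArg transpose hC
  have hBC : B * C = Cᵀ * (Bᵀ * B) * C := by rw [hCt]
  refine ⟨C, ?_, ?_⟩
  · rw [IsSymm, hBC]
    simp only [transpose_mul, transpose_transpose, Matrix.mul_assoc]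
  · rw [hBC, Matrix.mul_assoc Cᵀ, hC, Matrix.mul_assoc, hCt]

theorem exists_eq_mul_transpose_add_mul_transpose_add [Fintype l] [Fintype m] [DecidableEq l]
    {W : Matrix l l K} (hW : W.IsSymm) (B : Matrix l m K) :
    ∃ (X : Matrix l m K) (N : Matrix l l K), W = B * Xᵀ + X * Bᵀ + N ∧ N.IsSymm ∧ N * B = 0 := by
  obtain ⟨C, hP, hPB⟩ := exists_isSymm_mul_mul_eq_self B
  set P := B * C with hPdef
  -- chosen so that `B * Xᵀ + X * Bᵀ = P * W + W * P - P * W * P`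
  refine ⟨(1 - (2⁻¹ : K) • P) * W * Cᵀ, (1 - P) * W * (1 - P), ?_, ?_, ?_⟩
  · have hBX : B * ((1 - (2⁻¹ : K) • P) * W * Cᵀ)ᵀ = P * W * (1 - (2⁻¹ : K) • P) := by
      simp only [transpose_mul, transpose_transpose, transpose_sub, transpose_one, transpose_smul,
        hW.eq, hP.eq, ← Matrix.mul_assoc, ← hPdef]
    have hXB : (1 - (2⁻¹ : K) • P) * W * Cᵀ * Bᵀ = (1 - (2⁻¹ : K) • P) * W * P := by
      rw [Matrix.mul_assoc _ Cᵀ, ← transpose_mul, hP.eq]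
    rw [hBX, hXB]
    simp only [Matrix.mul_sub, Matrix.sub_mul, Matrix.mul_one, Matrix.one_mul, Matrix.mul_smul,
      Matrix.smul_mul, Matrix.mul_assoc]
    module
  · simp only [IsSymm, transpose_mul, transpose_sub, transpose_one, hW.eq, hP.eq, Matrix.mul_assoc]
  · have hB : (1 - P) * B = 0 := by rw [Matrix.sub_mul, Matrix.one_mul, hPB, sub_self]
    rw [Matrix.mul_assoc, hB, Matrix.mul_zero]

end Matrix

/-- a symmetric `W` can be written `W = BXᵀ + XBᵀ` iff
`rank [[W, B], [Bᵀ, 0]] = rank [[0, B], [Bᵀ, 0]]`, the latter rank being `2 rank B`. -/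
theorem stmt12 {n m : ℕ} (W : Matrix (Fin n) (Fin n) ℝ) (hW : W.IsSymm)
    (B : Matrix (Fin n) (Fin m) ℝ) :
    ((∃ X : Matrix (Fin n) (Fin m) ℝ, W = B * Xᵀ + X * Bᵀ) ↔
      (Matrix.fromBlocks W B Bᵀ (0 : Matrix (Fin m) (Fin m) ℝ)).rank =
        (Matrix.fromBlocks (0 : Matrix (Fin n) (Fin n) ℝ) B Bᵀ
          (0 : Matrix (Fin m) (Fin m) ℝ)).rank) ∧
    (Matrix.fromBlocks (0 : Matrix (Fin n) (Fin n) ℝ) B Bᵀ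
        (0 : Matrix (Fin m) (Fin m) ℝ)).rank = 2 * B.rank := by
  have hzero : (fromBlocks (0 : Matrix (Fin n) (Fin n) ℝ) B Bᵀ 0).rank = 2 * B.rank := by
    simpa using rank_fromBlocks_of_isSymm_of_mul_eq_zero (isSymm_zero) (Matrix.zero_mul B)
  refine ⟨⟨?_, fun h => ?_⟩, hzero⟩
  · rintro ⟨X, rfl⟩
    simpa using rank_fromBlocks_mul_transpose_add_add B X 0
  · obtain ⟨X, N, rfl, hN, hNB⟩ := exists_eq_mul_transpose_add_mul_transpose_add hW B
    rw [rank_fromBlocks_mul_transpose_add_add, rank_fromBlocks_of_isSymm_of_mul_eq_zero hN hNB,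
      hzero] at h
    obtain rfl : N = 0 := eq_zero_of_rank_eq_zero (by omega)
    exact ⟨X, add_zero _⟩
end

section
/- Let A ∈ ℝ^{n×n}, B ∈ ℝ^{n×m}, and let Q be a symmetric n×n real matrix. If Π₁ and Π₂ are symmetric n×n real matrices, each solving the algebraic Riccati equation AᵀΠ + ΠA − ΠBBᵀΠ + Q = 0, and both A − BBᵀΠ₁ and A − BBᵀΠ₂ are Hurwitz, then Π₁ = Π₂; i.e., the algebraic Riccati equation has at most one stabilizing symmetric solution. -/
/-!
Subtracting the two Riccati equations shows that `X = Π₁ - Π₂` solves the Sylvester equation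
`F₁ᵀ X + X F₂ = 0` for the closed-loop matrices `Fᵢ = A - BBᵀΠᵢ`, as `F₁ᵀ = Aᵀ - Π₁BBᵀ`.
Since `F₁ᵀ` and `-F₂` are Hurwitz and anti-Hurwitz, their spectra are disjoint, and a Sylvester
equation `G X = X H` with `σ(G) ∩ σ(H) = ∅` only has the solution `X = 0`: applying
`χ_G(G) = 0` gives `X χ_G(H) = 0`, and `χ_G(H)` is invertible because no eigenvalue of `H` is a
root of `χ_G`.
-/

open Matrix Polynomial

theorem isUnit_aeval_of_monic_of_forall_not_isRoot {K A : Type*} [Field K] [IsAlgClosed K]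
    [Ring A] [Algebra K A] {p : K[X]} (hp : p.Monic) {a : A}
    (h : ∀ k ∈ spectrum K a, ¬p.IsRoot k) : IsUnit (aeval a p) := by
  by_contra hu
  rw [(IsAlgClosed.splits p).eq_prod_roots_of_monic hp] at hu
  obtain ⟨k, hk, hroot⟩ := spectrum.exists_mem_of_not_isUnit_aeval_prod hu
  exact h k hk hroot

namespace Matrix

variable {K : Type*} {m n : Type*} [Fintype m] [DecidableEq m] [Fintype n] [DecidableEq n]

theorem spectrum_transpose [Field K] (M : Matrix n n K) : spectrum K Mᵀ = spectrum K M := by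
  ext k
  rw [mem_spectrum_iff_isRoot_charpoly, mem_spectrum_iff_isRoot_charpoly, charpoly_transpose]

theorem aeval_mul_eq_mul_aeval [CommRing K] {G : Matrix m m K} {H : Matrix n n K}
    {X : Matrix m n K} (h : G * X = X * H) (p : K[X]) : aeval G p * X = X * aeval H p := by
  have hpow : ∀ k : ℕ, G ^ k * X = X * H ^ k := by
    intro k
    induction k with
    | zero => simp
    | succ k ih => rw [pow_succ, pow_succ, Matrix.mul_assoc, h, ← Matrix.mul_assoc, ih,
        Matrix.mul_assoc]
  induction p using Polynomial.induction_on' with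
  | add p q hp hq => rw [map_add, map_add, Matrix.add_mul, Matrix.mul_add, hp, hq]
  | monomial k c => rw [aeval_monomial, aeval_monomial, ← Algebra.smul_def, ← Algebra.smul_def,
      Matrix.smul_mul, Matrix.mul_smul, hpow]

theorem eq_zero_of_mul_eq_mul_of_disjoint_spectrum [Field K] [IsAlgClosed K]
    {G : Matrix m m K} {H : Matrix n n K} {X : Matrix m n K}
    (hGH : Disjoint (spectrum K G) (spectrum K H)) (h : G * X = X * H) : X = 0 := by
  have hunit : IsUnit (aeval H G.charpoly).det := by
    rw [← isUnit_iff_isUnit_det]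
    exact isUnit_aeval_of_monic_of_forall_not_isRoot G.charpoly_monic fun k hkH hroot =>
      hGH.notMem_of_mem_right hkH (mem_spectrum_iff_isRoot_charpoly.2 hroot)
  have hzero : X * aeval H G.charpoly = 0 := by
    rw [← aeval_mul_eq_mul_aeval h, aeval_self_charpoly, Matrix.zero_mul]
  calc X = X * aeval H G.charpoly * (aeval H G.charpoly)⁻¹ :=
        (mul_nonsing_inv_cancel_right _ X hunit).symm
    _ = 0 := by rw [hzero, Matrix.zero_mul]

end Matrix

namespace IsHurwitz

variable {n : ℕ} {F G : Matrix (Fin n) (Fin n) ℝ}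

theorem transpose (hF : IsHurwitz F) : IsHurwitz Fᵀ := by
  intro μ hμ
  rw [transpose_map, spectrum_transpose] at hμ
  exact hF μ hμ

theorem disjoint_spectrum_neg (hF : IsHurwitz F) (hG : IsHurwitz G) :
    Disjoint (spectrum ℂ (F.map (algebraMap ℝ ℂ))) (spectrum ℂ (-G.map (algebraMap ℝ ℂ))) := by
  rw [← spectrum.neg_eq, Set.disjoint_left]
  intro μ hμF hμG
  have hre_neg : μ.re < 0 := hF μ hμF
  have hre_pos : 0 < μ.re := by simpa using hG (-μ) (Set.mem_neg.1 hμG)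
  exact lt_asymm hre_neg hre_pos

theorem eq_zero_of_mul_add_mul_eq_zero (hF : IsHurwitz F) (hG : IsHurwitz G)
    {X : Matrix (Fin n) (Fin n) ℝ} (h : F * X + X * G = 0) : X = 0 := by
  have hC := congrArg (algebraMap ℝ ℂ).mapMatrix h
  rw [map_add, map_mul, map_mul, map_zero] at hC
  have hX : X.map (algebraMap ℝ ℂ) = 0 := by
    refine eq_zero_of_mul_eq_mul_of_disjoint_spectrum (hF.disjoint_spectrum_neg hG) ?_
    rw [Matrix.mul_neg]
    exact eq_neg_of_add_eq_zero_left hC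
  exact map_injective (algebraMap ℝ ℂ).injective (hX.trans (Matrix.map_zero _ (map_zero _)).symm)

end IsHurwitz

theorem riccati_sub_riccati {R : Type*} [Ring R] {a a' s q p₁ p₂ : R}
    (h₁ : a' * p₁ + p₁ * a - p₁ * s * p₁ + q = 0) (h₂ : a' * p₂ + p₂ * a - p₂ * s * p₂ + q = 0) :
    (a' - p₁ * s) * (p₁ - p₂) + (p₁ - p₂) * (a - s * p₂) = 0 :=
  calc (a' - p₁ * s) * (p₁ - p₂) + (p₁ - p₂) * (a - s * p₂)
      = (a' * p₁ + p₁ * a - p₁ * s * p₁ + q) - (a' * p₂ + p₂ * a - p₂ * s * p₂ + q) := by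
        noncomm_ring
    _ = 0 := by rw [h₁, h₂, sub_zero]

theorem stmt13_general {n m : ℕ} (A : Matrix (Fin n) (Fin n) ℝ) (B : Matrix (Fin n) (Fin m) ℝ)
    (Q : Matrix (Fin n) (Fin n) ℝ)
    (P₁ P₂ : Matrix (Fin n) (Fin n) ℝ) (hP₁ : P₁.IsSymm)
    (hARE₁ : Aᵀ * P₁ + P₁ * A - P₁ * (B * Bᵀ) * P₁ + Q = 0)
    (hARE₂ : Aᵀ * P₂ + P₂ * A - P₂ * (B * Bᵀ) * P₂ + Q = 0)
    (hHur₁ : IsHurwitz (A - B * Bᵀ * P₁)) (hHur₂ : IsHurwitz (A - B * Bᵀ * P₂)) :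
    P₁ = P₂ := by
  have hF₁ : (A - B * Bᵀ * P₁)ᵀ = Aᵀ - P₁ * (B * Bᵀ) := by
    rw [transpose_sub, transpose_mul, transpose_mul, transpose_transpose, hP₁.eq]
  rw [← sub_eq_zero]
  refine hHur₁.transpose.eq_zero_of_mul_add_mul_eq_zero hHur₂ ?_
  rw [hF₁]
  exact riccati_sub_riccati hARE₁ hARE₂

/-- the algebraic Riccati equation `AᵀΠ + ΠA − ΠBBᵀΠ + Q = 0`
has at most one stabilizing symmetric solution. -/
theorem stmt13 {n m : ℕ} (A : Matrix (Fin n) (Fin n) ℝ) (B : Matrix (Fin n) (Fin m) ℝ)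
    (Q : Matrix (Fin n) (Fin n) ℝ) (hQ : Q.IsSymm)
    (P₁ P₂ : Matrix (Fin n) (Fin n) ℝ) (hP₁ : P₁.IsSymm) (hP₂ : P₂.IsSymm)
    (hARE₁ : Aᵀ * P₁ + P₁ * A - P₁ * (B * Bᵀ) * P₁ + Q = 0)
    (hARE₂ : Aᵀ * P₂ + P₂ * A - P₂ * (B * Bᵀ) * P₂ + Q = 0)
    (hHur₁ : IsHurwitz (A - B * Bᵀ * P₁)) (hHur₂ : IsHurwitz (A - B * Bᵀ * P₂)) :
    P₁ = P₂ :=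
  stmt13_general A B Q P₁ P₂ hP₁ hARE₁ hARE₂ hHur₁ hHur₂
end

section
/- Let B ∈ ℝ^{n×m} and let Π denote the n×n matrix of the orthogonal projection of ℝⁿ onto the orthogonal complement of the column space of B. If M : ℝ → ℝ^{n×n} is an infinitely differentiable symmetric-matrix-valued function satisfying Π M(t) Π = 0 for all t, then there exists an infinitely differentiable function U : ℝ → ℝ^{n×m} such that M(t) = B U(t)ᵀ + U(t) Bᵀ for all t. -/
open Matrix

/-- with `P` the orthogonal projection onto the orthogonal complement of
the column space of `B`, a smooth symmetric-matrix-valued `M(t)` with `P M(t) P = 0`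
for all `t` can be written `M(t) = B U(t)ᵀ + U(t) Bᵀ` with `U` smooth.
Smoothness is entrywise. -/
theorem stmt14 {n m : ℕ} (B : Matrix (Fin n) (Fin m) ℝ) (P : Matrix (Fin n) (Fin n) ℝ)
    (hPsym : P.IsSymm) (hPidem : P * P = P)
    (hPker : ∀ x : Fin n → ℝ, P.mulVec x = 0 ↔ x ∈ Set.range B.mulVec)
    (M : ℝ → Matrix (Fin n) (Fin n) ℝ)
    (hMsmooth : ∀ i j, ContDiff ℝ (⊤ : ℕ∞) (fun t => M t i j))
    (hMsym : ∀ t : ℝ, (M t).IsSymm)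
    (hMP : ∀ t : ℝ, P * M t * P = 0) :
    ∃ U : ℝ → Matrix (Fin n) (Fin m) ℝ,
      (∀ i j, ContDiff ℝ (⊤ : ℕ∞) (fun t => U t i j)) ∧
      ∀ t : ℝ, M t = B * (U t)ᵀ + U t * Bᵀ := by
  classical
  set f := B.mulVecLin with hf
  obtain ⟨g, hg⟩ := LinearMap.exists_rightInverse_of_surjective f.rangeRestrict
      (LinearMap.range_rangeRestrict f)
  obtain ⟨T, hT⟩ := Submodule.exists_isCompl (LinearMap.range f)
  set Glin : (Fin n → ℝ) →ₗ[ℝ] (Fin m → ℝ) :=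
    g ∘ₗ ((LinearMap.range f).linearProjOfIsCompl T hT) with hGlin
  set G := LinearMap.toMatrix' Glin with hG
  have hGsec : ∀ x, x ∈ LinearMap.range f → B.mulVec (G.mulVec x) = x := by
    intro x hx
    have h1 : G.mulVec x = Glin x := by
      rw [hG, ← Matrix.toLin'_apply, Matrix.toLin'_toMatrix']
    have h2 : ((LinearMap.range f).linearProjOfIsCompl T hT) x = ⟨x, hx⟩ :=
      Submodule.linearProjOfIsCompl_apply_left hT ⟨x, hx⟩
    have h3 := LinearMap.congr_fun hg ⟨x, hx⟩
    rw [h1, hGlin]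
    simp only [LinearMap.comp_apply, h2]
    have : f (g ⟨x, hx⟩) = x := by
      have := congrArg (Subtype.val) h3
      simpa using this
    simpa [hf] using this
  -- key: B * (G * X) = X whenever P * X = 0
  have hBG : ∀ X : Matrix (Fin n) (Fin n) ℝ, P * X = 0 → B * (G * X) = X := by
    intro X hX
    ext i j
    have hc : P.mulVec (fun k => X k j) = 0 := by
      funext i'
      have : (P * X) i' j = 0 := by rw [hX]; rfl
      simpa [Matrix.mulVec, Matrix.mul_apply, dotProduct] using this
    have hmem : (fun k => X k j) ∈ LinearMap.range f := by
      obtain ⟨y, hy⟩ := (hPker _).mp hc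
      exact ⟨y, by simpa [hf, Matrix.mulVecLin_apply] using hy⟩
    have := congrFun (hGsec _ hmem) i
    simpa [Matrix.mulVec, Matrix.mul_apply, dotProduct, Finset.mul_sum] using this
  -- the half-projection
  set C : Matrix (Fin n) (Fin n) ℝ := (2⁻¹ : ℝ) • (1 - P) with hC
  have hCC : C + C = 1 - P := by
    rw [hC, ← add_smul]; norm_num
  set R : Matrix (Fin n) (Fin n) ℝ := P + C with hR
  set N : ℝ → Matrix (Fin n) (Fin n) ℝ := fun t => (1 - P) * M t * R with hN
  have hPN : ∀ t, P * N t = 0 := by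
    intro t
    have hPQ : P * (1 - P) = 0 := by rw [mul_sub, mul_one, hPidem, sub_self]
    calc P * N t = (P * (1 - P)) * (M t * R) := by rw [hN]; ring_nf; rw [mul_assoc, mul_assoc]
    _ = 0 := by rw [hPQ, zero_mul]
  refine ⟨fun t => (G * N t)ᵀ, ?_, ?_⟩
  · -- smoothness
    have smoothMul : ∀ {p q : ℕ} (A : Matrix (Fin p) (Fin n) ℝ) (D : Matrix (Fin n) (Fin q) ℝ)
        (i : Fin p) (j : Fin q), ContDiff ℝ (⊤ : ℕ∞) fun t => (A * M t * D) i j := by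
      intro p q A D i j
      have hrw : (fun t => (A * M t * D) i j) = fun t => ∑ l, (∑ k, A i k * M t k l) * D l j := by
        funext t; simp [Matrix.mul_apply]
      rw [hrw]
      exact ContDiff.sum fun l _ =>
        (ContDiff.sum fun k _ => contDiff_const.mul (hMsmooth k l)).mul contDiff_const
    intro i j
    have hrw2 : (fun t => ((G * N t)ᵀ : Matrix (Fin n) (Fin m) ℝ) i j)
        = fun t => (((G * (1 - P)) * M t * R : Matrix (Fin m) (Fin n) ℝ)) j i := by
      funext t
      have hmm : G * ((1 - P) * M t * R) = G * (1 - P) * M t * R := by simp only [Matrix.mul_assoc]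
      rw [hN]
      simp only [Matrix.transpose_apply]
      rw [hmm]
    show ContDiff ℝ (⊤ : ℕ∞) fun t => ((G * N t)ᵀ : Matrix (Fin n) (Fin m) ℝ) i j
    rw [hrw2]
    exact smoothMul _ _ j i
  · -- the identity
    intro t
    show M t = B * ((G * N t)ᵀ)ᵀ + (G * N t)ᵀ * Bᵀ
    have hUt : ((G * N t)ᵀ)ᵀ = G * N t := transpose_transpose _
    rw [hUt, hBG (N t) (hPN t)]
    have hNT : (G * N t)ᵀ * Bᵀ = (N t)ᵀ := by
      rw [← Matrix.transpose_mul, hBG (N t) (hPN t)]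
    rw [hNT]
    have hNTe : (N t)ᵀ = R * M t * (1 - P) := by
      have hRT : Rᵀ = R := by
        simp [hR, hC, Matrix.transpose_smul, Matrix.transpose_sub, Matrix.transpose_one,
          hPsym.eq]
      have h1P : ((1 - P) : Matrix (Fin n) (Fin n) ℝ)ᵀ = 1 - P := by
        simp [Matrix.transpose_sub, Matrix.transpose_one, hPsym.eq]
      calc (N t)ᵀ = ((1 - P) * M t * R)ᵀ := by rw [hN]
        _ = Rᵀ * ((M t)ᵀ * (1 - P)ᵀ) := by rw [Matrix.transpose_mul, Matrix.transpose_mul]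
        _ = R * M t * (1 - P) := by rw [hRT, (hMsym t).eq, h1P, mul_assoc]
    have h1 : ((1 : Matrix (Fin n) (Fin n) ℝ) - P) + P = 1 := by abel
    calc M t = ((C + C) + P) * M t * ((C + C) + P) := by rw [hCC, h1, one_mul, mul_one]
      _ = (C + C) * M t * (P + C) + (P + C) * M t * (C + C) + P * M t * P := by noncomm_ring
      _ = N t + (N t)ᵀ := by
          rw [hMP t, add_zero, hCC, ← hR, hNTe, hN]
end

section
/- Let A ∈ ℝ^{n×n}, B ∈ ℝ^{n×m}, B₁ ∈ ℝ^{n×p}, and let Σ be a symmetric positive semidefinite n×n matrix. The dual functional G defined on symmetric n×n matrices by G(Π) = trace((AᵀΠ + ΠA − ΠBBᵀΠ)Σ + ΠB₁B₁ᵀ) is concave: for all symmetric Π₁, Π₂ and all λ ∈ [0,1], G(λΠ₁ + (1−λ)Π₂) ≥ λG(Π₁) + (1−λ)G(Π₂). -/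
open Matrix

/-! The only non-affine part of `G` is the quadratic `Π ↦ -trace(Π BBᵀ Π Σ)`, so
`G(λΠ₁ + (1-λ)Π₂) - λG(Π₁) - (1-λ)G(Π₂) = λ(1-λ) trace(D BBᵀ D Σ)` with `D = Π₁ - Π₂`.
For symmetric `D` this equals `trace((BᵀD) Σ (BᵀD)ᵀ)`, the trace of a positive semidefinite matrix. -/

namespace Matrix

variable {ι κ μ : Type*} [Fintype ι] [Fintype κ]

lemma IsSymm.trace_mul_mul_mul_nonneg {D S : Matrix ι ι ℝ} (hD : D.IsSymm)
    (hS : S.PosSemidef) (C : Matrix ι κ ℝ) : 0 ≤ (D * (C * Cᵀ) * D * S).trace := by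
  have hpsd : ((Cᵀ * D) * S * (Cᵀ * D)ᵀ).PosSemidef := by
    simpa using hS.mul_mul_conjTranspose_same (Cᵀ * D)
  have htrace : (D * (C * Cᵀ) * D * S).trace = ((Cᵀ * D) * S * (Cᵀ * D)ᵀ).trace := by
    rw [transpose_mul, hD.eq, transpose_transpose, trace_mul_comm (Cᵀ * D * S) (D * C)]
    simp only [Matrix.mul_assoc]
  exact htrace ▸ hpsd.trace_nonneg

def dualFunctional [Fintype μ] (A : Matrix ι ι ℝ) (B : Matrix ι κ ℝ) (B₁ : Matrix ι μ ℝ)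
    (S P : Matrix ι ι ℝ) : ℝ :=
  ((Aᵀ * P + P * A - P * (B * Bᵀ) * P) * S + P * (B₁ * B₁ᵀ)).trace

variable [Fintype μ] (A : Matrix ι ι ℝ) (B : Matrix ι κ ℝ) (B₁ : Matrix ι μ ℝ)

lemma dualFunctional_smul_add_one_sub_smul (S P₁ P₂ : Matrix ι ι ℝ) (l : ℝ) :
    dualFunctional A B B₁ S (l • P₁ + (1 - l) • P₂) =
      l * dualFunctional A B B₁ S P₁ + (1 - l) * dualFunctional A B B₁ S P₂
        + l * (1 - l) * ((P₁ - P₂) * (B * Bᵀ) * (P₁ - P₂) * S).trace := by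
  simp only [dualFunctional, add_mul, mul_add, sub_mul, mul_sub, smul_mul, Matrix.mul_smul,
    trace_add, trace_sub, trace_smul, smul_eq_mul]
  ring

lemma concaveOn_dualFunctional {S : Matrix ι ι ℝ} (hS : S.PosSemidef) :
    ConcaveOn ℝ {P : Matrix ι ι ℝ | P.IsSymm} (dualFunctional A B B₁ S) := by
  refine ⟨fun P₁ h₁ P₂ h₂ a b _ _ _ ↦ (h₁.smul a).add (h₂.smul b), ?_⟩
  rintro P₁ (h₁ : P₁.IsSymm) P₂ (h₂ : P₂.IsSymm) a b ha hb hab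
  obtain rfl : b = 1 - a := eq_sub_of_add_eq' hab
  rw [dualFunctional_smul_add_one_sub_smul]
  exact le_add_of_nonneg_right <|
    mul_nonneg (mul_nonneg ha hb) ((h₁.sub h₂).trace_mul_mul_mul_nonneg hS B)

end Matrix

/-- for `Σ ⪰ 0`, the dual functional
`G(Π) = trace((AᵀΠ + ΠA − ΠBBᵀΠ)Σ + ΠB₁B₁ᵀ)` is concave on symmetric matrices. -/
theorem stmt17 {n m p : ℕ} (A : Matrix (Fin n) (Fin n) ℝ) (B : Matrix (Fin n) (Fin m) ℝ)
    (B₁ : Matrix (Fin n) (Fin p) ℝ)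
    (S : Matrix (Fin n) (Fin n) ℝ) (hS : S.PosSemidef)
    (P₁ P₂ : Matrix (Fin n) (Fin n) ℝ) (hP₁ : P₁.IsSymm) (hP₂ : P₂.IsSymm)
    (l : ℝ) (hl0 : 0 ≤ l) (hl1 : l ≤ 1) :
    l * ((Aᵀ * P₁ + P₁ * A - P₁ * (B * Bᵀ) * P₁) * S + P₁ * (B₁ * B₁ᵀ)).trace
      + (1 - l) * ((Aᵀ * P₂ + P₂ * A - P₂ * (B * Bᵀ) * P₂) * S + P₂ * (B₁ * B₁ᵀ)).trace
    ≤ ((Aᵀ * (l • P₁ + (1 - l) • P₂) + (l • P₁ + (1 - l) • P₂) * A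
          - (l • P₁ + (1 - l) • P₂) * (B * Bᵀ) * (l • P₁ + (1 - l) • P₂)) * S
        + (l • P₁ + (1 - l) • P₂) * (B₁ * B₁ᵀ)).trace :=
  (concaveOn_dualFunctional A B B₁ hS).2 hP₁ hP₂ hl0 (sub_nonneg.2 hl1) (add_sub_cancel l 1)
end
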